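/- Suppose for each unit vector u and each t > 0 the map b ↦ F^u_b(t) := P(τ_{Π⁺(u,b)} ≤ t) is non-increasing in b and strictly decreasing on U^u_t = {b : F^u_b(t) ∈ (0,1)}. Let t_r > 0 and suppose C(u) satisfies E[τ_{Π⁺(u,C(u))}] = t_r with τ_{Π⁺(u,C(u))} non-deterministic (P(τ_{Π⁺(u,C(u))} = t_r) < 1). If b > C(u) satisfies E[τ_{Π⁺(u,b)}] = t_r as well, then a contradiction follows; i.e., b ↦ E[τ_{Π⁺(u,b)}] takes the value t_r at most at the single point C(u). -/

import Mathlib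

open scoped ENNReal NNReal RealInnerProductSpace
open MeasureTheory

/-- First hitting time of a set `A` by the path `t ↦ V t ω`, with `inf ∅ = ∞`. -/
noncomputable def hittingTime {d : ℕ} {Ω : Type*}
    (V : ℝ≥0 → Ω → EuclideanSpace ℝ (Fin d))
    (A : Set (EuclideanSpace ℝ (Fin d))) (ω : Ω) : ℝ≥0∞ :=
  ⨅ (t : ℝ≥0) (_ : V t ω ∈ A), (t : ℝ≥0∞)

/-- The half-space `Π⁺(u, c) = {v : ⟨u, v⟩ ≥ c}`. -/
def piPlus {d : ℕ} (u : EuclideanSpace ℝ (Fin d)) (c : ℝ) :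
    Set (EuclideanSpace ℝ (Fin d)) := {v | c ≤ ⟪u, v⟫}

/-- The support function `B(𝓑, u) = sup {⟨u, v⟩ : v ∈ 𝓑}`. -/
noncomputable def suppFn {d : ℕ} (B : Set (EuclideanSpace ℝ (Fin d)))
    (u : EuclideanSpace ℝ (Fin d)) : ℝ :=
  sSup ((fun v => ⟪u, v⟫) '' B)

/- Stochastic dominance of `τ_{Π⁺(u,b)}` over `τ_{Π⁺(u,C)}` together with equal means forces
their distribution functions to agree at almost every `t > 0` (layer cake formula). By strict
monotonicity in the level, a common value of `F^u_C(t)` and `F^u_b(t)` must be `0` or `1`.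
A distribution function that is `1` below the mean would make the mean smaller, so it vanishes
on `(0, t_r)`; hence `τ_{Π⁺(u,C)} ≥ t_r` almost surely, and equality of means makes it
deterministic. -/

open Set Filter

theorem Monotone.le_of_ae_restrict_Ioo_le {β : Type*} [Preorder β] {F : ℝ → β}
    (hF : Monotone F) {a c : ℝ} (hac : a < c) {y : β}
    (h : ∀ᵐ t ∂volume.restrict (Ioo a c), F t ≤ y) {t : ℝ} (ht : t < c) : F t ≤ y := by
  have : (ae (volume.restrict (Ioo (max a t) c))).NeBot := by
    rw [ae_neBot, Ne, Measure.restrict_eq_zero, Real.volume_Ioo]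
    simpa using max_lt hac ht
  obtain ⟨t', ht', hFt'⟩ := ((ae_restrict_mem measurableSet_Ioo).and
    (ae_restrict_of_ae_restrict_of_subset (Ioo_subset_Ioo_left (le_max_left a t)) h)).exists
  exact (hF ((le_max_right a t).trans ht'.1.le)).trans hFt'

section

variable {Ω : Type*} [MeasurableSpace Ω]

theorem lintegral_eq_setLIntegral_Ioi_meas_ofReal_lt {μ : Measure Ω} {τ : Ω → ℝ≥0∞}
    (hτ : AEMeasurable τ μ) (hfin : ∫⁻ ω, τ ω ∂μ ≠ ∞) :
    ∫⁻ ω, τ ω ∂μ = ∫⁻ t in Ioi 0, μ {ω | ENNReal.ofReal t < τ ω} := by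
  have hlt : ∀ᵐ ω ∂μ, τ ω < ∞ := ae_lt_top' hτ hfin
  calc ∫⁻ ω, τ ω ∂μ = ∫⁻ ω, ENNReal.ofReal (τ ω).toReal ∂μ :=
        lintegral_congr_ae (hlt.mono fun ω h => (ENNReal.ofReal_toReal h.ne).symm)
    _ = ∫⁻ t in Ioi 0, μ {ω | t < (τ ω).toReal} :=
        lintegral_eq_lintegral_meas_lt μ (ae_of_all _ fun _ => ENNReal.toReal_nonneg)
          hτ.ennreal_toReal
    _ = ∫⁻ t in Ioi 0, μ {ω | ENNReal.ofReal t < τ ω} :=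
        setLIntegral_congr_fun measurableSet_Ioi fun t ht => measure_congr <|
          eventuallyEq_set.2 <| hlt.mono fun ω h =>
            (ENNReal.ofReal_lt_iff_lt_toReal ht.le h.ne).symm

theorem prob_lt_eq_one_sub_prob_le {P : Measure Ω} [IsProbabilityMeasure P]
    {τ : Ω → ℝ≥0∞} (hτ : Measurable τ) (x : ℝ≥0∞) : P {ω | x < τ ω} = 1 - P {ω | τ ω ≤ x} := by
  rw [← prob_compl_eq_one_sub (s := {ω | τ ω ≤ x}) (hτ measurableSet_Iic)]
  simp only [compl_ofPred, not_le]

theorem cdf_ae_eq_of_le_of_lintegral_eq {P : Measure Ω} [IsProbabilityMeasure P]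
    {σ τ : Ω → ℝ≥0∞} (hσ : Measurable σ) (hτ : Measurable τ)
    (hle : ∀ t : ℝ, 0 < t →
      P {ω | τ ω ≤ ENNReal.ofReal t} ≤ P {ω | σ ω ≤ ENNReal.ofReal t})
    (hmean : ∫⁻ ω, σ ω ∂P = ∫⁻ ω, τ ω ∂P) (hfin : ∫⁻ ω, σ ω ∂P ≠ ∞) :
    ∀ᵐ t ∂volume.restrict (Ioi 0),
      P {ω | τ ω ≤ ENNReal.ofReal t} = P {ω | σ ω ≤ ENNReal.ofReal t} := by
  have htail_le : ∀ᵐ t ∂volume.restrict (Ioi 0),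
      P {ω | ENNReal.ofReal t < σ ω} ≤ P {ω | ENNReal.ofReal t < τ ω} := by
    refine (ae_restrict_iff' measurableSet_Ioi).2 (ae_of_all _ fun t ht => ?_)
    rw [prob_lt_eq_one_sub_prob_le hσ, prob_lt_eq_one_sub_prob_le hτ]
    exact tsub_le_tsub_left (hle t ht) 1
  have htail_anti : Antitone fun t : ℝ => P {ω | ENNReal.ofReal t < τ ω} :=
    fun _ _ h => measure_mono fun _ hω => (ENNReal.ofReal_le_ofReal h).trans_lt hω
  have htail := ae_eq_of_ae_le_of_lintegral_le htail_le
    (by rwa [← lintegral_eq_setLIntegral_Ioi_meas_ofReal_lt hσ.aemeasurable hfin])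
    htail_anti.measurable.aemeasurable
    (by rw [← lintegral_eq_setLIntegral_Ioi_meas_ofReal_lt hσ.aemeasurable hfin,
      ← lintegral_eq_setLIntegral_Ioi_meas_ofReal_lt hτ.aemeasurable (hmean ▸ hfin), hmean])
  filter_upwards [htail] with t ht
  rw [prob_lt_eq_one_sub_prob_le hσ, prob_lt_eq_one_sub_prob_le hτ,
    ENNReal.sub_right_inj ENNReal.one_ne_top prob_le_one prob_le_one] at ht
  exact ht.symm

theorem measure_lt_ofReal_eq_zero {μ : Measure Ω} {τ : Ω → ℝ≥0∞} {c : ℝ}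
    (h : ∀ t < c, μ {ω | τ ω ≤ ENNReal.ofReal t} = 0) :
    μ {ω | τ ω < ENNReal.ofReal c} = 0 := by
  refine measure_mono_null
    (t := ⋃ (q : ℚ) (_ : (q : ℝ) < c), {ω | τ ω ≤ ENNReal.ofReal q}) ?_
    (measure_iUnion_null fun q => measure_iUnion_null fun hq => h q hq)
  intro ω hω
  obtain ⟨q, -, hτq, hqc⟩ := ENNReal.lt_iff_exists_rat_btwn.1 hω
  simp only [mem_iUnion]
  exact ⟨q, (ENNReal.ofReal_lt_ofReal_iff'.1 hqc).1, hτq.le⟩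

theorem ae_eq_const_of_cdf_eq_zero_or_one {P : Measure Ω} [IsProbabilityMeasure P]
    {τ : Ω → ℝ≥0∞} (hτ : Measurable τ) {m : ℝ} (hm : 0 < m)
    (hmean : ∫⁻ ω, τ ω ∂P = ENNReal.ofReal m)
    (h01 : ∀ᵐ t ∂volume.restrict (Ioi 0),
      P {ω | τ ω ≤ ENNReal.ofReal t} = 0 ∨ P {ω | τ ω ≤ ENNReal.ofReal t} = 1) :
    τ =ᵐ[P] fun _ => ENNReal.ofReal m := by
  have hcdf_ne_one : ∀ t < m, P {ω | τ ω ≤ ENNReal.ofReal t} ≠ 1 := by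
    intro t ht h1
    have hle : ∀ᵐ ω ∂P, τ ω ≤ ENNReal.ofReal t :=
      (ae_iff_prob_eq_one (measurableSet_setOfPred.1 (hτ measurableSet_Iic))).2 h1
    have := lintegral_mono_ae hle
    rw [hmean, lintegral_const, measure_univ, mul_one] at this
    exact ((ENNReal.ofReal_lt_ofReal_iff hm).2 ht).not_ge this
  have hcdf_mono : Monotone fun t : ℝ => P {ω | τ ω ≤ ENNReal.ofReal t} :=
    fun _ _ h => measure_mono fun _ hω => hω.trans (ENNReal.ofReal_le_ofReal h)
  have hcdf_zero : ∀ t < m, P {ω | τ ω ≤ ENNReal.ofReal t} = 0 := by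
    refine fun t ht => le_zero_iff.1 (hcdf_mono.le_of_ae_restrict_Ioo_le hm ?_ ht)
    filter_upwards [ae_restrict_of_ae_restrict_of_subset Ioo_subset_Ioi_self h01,
      ae_restrict_mem measurableSet_Ioo] with s hs hs_mem
    exact (hs.resolve_right (hcdf_ne_one s hs_mem.2)).le
  have hge : ∀ᵐ ω ∂P, ENNReal.ofReal m ≤ τ ω := by
    simpa only [ae_iff, not_le] using measure_lt_ofReal_eq_zero hcdf_zero
  exact (ae_eq_of_ae_le_of_lintegral_le hge (by simp) hτ.aemeasurable (by simp [hmean])).symm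

end

theorem stmt_12_general {d : ℕ} {Ω : Type*} [MeasurableSpace Ω]
    (P : Measure Ω) [IsProbabilityMeasure P]
    (V : ℝ≥0 → Ω → EuclideanSpace ℝ (Fin d))
    (u : EuclideanSpace ℝ (Fin d))
    (hmeas : ∀ b : ℝ, Measurable fun ω => hittingTime V (piPlus u b) ω)
    (hanti : ∀ t : ℝ, 0 < t →
      Antitone fun b : ℝ => P {ω | hittingTime V (piPlus u b) ω ≤ ENNReal.ofReal t})
    (hstrict : ∀ t : ℝ, 0 < t →
      StrictAntiOn (fun b : ℝ => P {ω | hittingTime V (piPlus u b) ω ≤ ENNReal.ofReal t})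
        {b : ℝ | P {ω | hittingTime V (piPlus u b) ω ≤ ENNReal.ofReal t} ∈ Set.Ioo (0 : ℝ≥0∞) 1})
    (tr : ℝ) (htr : 0 < tr) (C : ℝ)
    (hC : ∫⁻ ω, hittingTime V (piPlus u C) ω ∂P = ENNReal.ofReal tr)
    (hnondet : P {ω | hittingTime V (piPlus u C) ω = ENNReal.ofReal tr} < 1)
    (b : ℝ) (hb : C < b)
    (hbmean : ∫⁻ ω, hittingTime V (piPlus u b) ω ∂P = ENNReal.ofReal tr) :
    False := by
  have hcdf := cdf_ae_eq_of_le_of_lintegral_eq (hmeas C) (hmeas b) (fun t ht => hanti t ht hb.le)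
    (hC.trans hbmean.symm) (hC ▸ ENNReal.ofReal_ne_top)
  have h01 : ∀ᵐ t ∂volume.restrict (Ioi 0),
      P {ω | hittingTime V (piPlus u C) ω ≤ ENNReal.ofReal t} = 0 ∨
      P {ω | hittingTime V (piPlus u C) ω ≤ ENNReal.ofReal t} = 1 := by
    filter_upwards [hcdf, ae_restrict_mem measurableSet_Ioi] with t hcdf_eq ht
    by_contra! hmid
    have hC_mem : P {ω | hittingTime V (piPlus u C) ω ≤ ENNReal.ofReal t} ∈ Ioo 0 1 :=
      ⟨pos_iff_ne_zero.2 hmid.1, prob_le_one.lt_of_ne hmid.2⟩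
    exact (hstrict t ht hC_mem (by rwa [mem_ofPred_eq, hcdf_eq]) hb).ne hcdf_eq
  have hdet := ae_eq_const_of_cdf_eq_zero_or_one (hmeas C) htr hC h01
  exact hnondet.ne <|
    (ae_iff_prob_eq_one (measurableSet_setOfPred.1 (hmeas C (measurableSet_singleton _)))).1 hdet

/-- Uniqueness of the return-period threshold: if `b ↦ F^u_b(t)` is non-increasing and
strictly decreasing on `U^u_t = {b : F^u_b(t) ∈ (0,1)}`, `E[τ_{Π⁺(u,C)}] = t_r` with
`τ_{Π⁺(u,C)}` non-deterministic, then no `b > C` can also satisfy `E[τ_{Π⁺(u,b)}] = t_r`. -/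
theorem stmt_12 {d : ℕ} {Ω : Type*} [MeasurableSpace Ω]
    (P : Measure Ω) [IsProbabilityMeasure P]
    (V : ℝ≥0 → Ω → EuclideanSpace ℝ (Fin d))
    (u : EuclideanSpace ℝ (Fin d)) (hu : ‖u‖ = 1)
    (hmeas : ∀ b : ℝ, Measurable fun ω => hittingTime V (piPlus u b) ω)
    (hanti : ∀ t : ℝ, 0 < t →
      Antitone fun b : ℝ => P {ω | hittingTime V (piPlus u b) ω ≤ ENNReal.ofReal t})
    (hstrict : ∀ t : ℝ, 0 < t →
      StrictAntiOn (fun b : ℝ => P {ω | hittingTime V (piPlus u b) ω ≤ ENNReal.ofReal t})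
        {b : ℝ | P {ω | hittingTime V (piPlus u b) ω ≤ ENNReal.ofReal t} ∈ Set.Ioo (0 : ℝ≥0∞) 1})
    (tr : ℝ) (htr : 0 < tr) (C : ℝ)
    (hC : ∫⁻ ω, hittingTime V (piPlus u C) ω ∂P = ENNReal.ofReal tr)
    (hnondet : P {ω | hittingTime V (piPlus u C) ω = ENNReal.ofReal tr} < 1)
    (b : ℝ) (hb : C < b)
    (hbmean : ∫⁻ ω, hittingTime V (piPlus u b) ω ∂P = ENNReal.ofReal tr) :
    False :=
  stmt_12_general P V u hmeas hanti hstrict tr htr C hC hnondet b hb hbmean
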